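/- arXiv:2501.06966 — 2 statements merged into one kernel-verified Lean document; each statement's English description precedes it below -/
import Mathlib

section
/- The Cantor-like encoding has a gap around its threshold: for every binary sequence s : ℕ → {0,1}, if s_0 = 1 then 8·C⁺(s) − 3 ≥ 1, and if s_0 = 0 then 8·C⁺(s) − 3 ≤ −1. Consequently ρ(8·C⁺(s) − 3) = 2·s_0 − 1, where ρ is the saturable nonlinearity. -/
/-- A real number is a bit: `0` or `1`. -/
def IsBit (x : ℝ) : Prop := x = 0 ∨ x = 1

/-- Cantor-like base-4 encoding of the right half-tape `s₀ s₁ s₂ …`. -/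
noncomputable def Cp (s : ℕ → ℝ) : ℝ :=
  ∑' k : ℕ, (-1 : ℝ) ^ k * (2 * s k + 1) / 4 ^ (k + 1)

/-! Splitting off the head gives `Cp s = (2 s₀ + 1)/4 - Cp (tail s)/4`, and the terms are dominated
by a geometric series of sum `1`, so `|Cp t| ≤ 1` for every `[0, 1]`-valued `t`. One unfolding turns
this into `0 ≤ Cp t`, and a second one into `s₀/2 ≤ Cp s ≤ (2 s₀ + 1)/4`: the encoding lies in
`[1/2, 3/4]` when `s₀ = 1` and in `[0, 1/4]` when `s₀ = 0`. -/

lemma hasSum_three_quarters_mul_geometric :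
    HasSum (fun k : ℕ => 3 / 4 * (1 / 4 : ℝ) ^ k) 1 := by
  have h := (hasSum_geometric_of_lt_one (r := (1 / 4 : ℝ)) (by norm_num) (by norm_num)).mul_left
    (3 / 4)
  norm_num at h ⊢
  exact h

section UnitInterval

variable {s : ℕ → ℝ} (hs : ∀ k, s k ∈ Set.Icc (0 : ℝ) 1)
include hs

lemma abs_Cp_term_le (k : ℕ) :
    |(-1 : ℝ) ^ k * (2 * s k + 1) / 4 ^ (k + 1)| ≤ 3 / 4 * (1 / 4) ^ k := by
  obtain ⟨h0, h1⟩ := hs k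
  rw [abs_div, abs_mul, abs_pow, abs_neg, abs_one, one_pow, one_mul,
    abs_of_nonneg (by linarith), abs_of_pos (by positivity), div_le_iff₀ (by positivity)]
  calc 2 * s k + 1 ≤ 3 := by linarith
    _ = 3 / 4 * (1 / 4) ^ k * 4 ^ (k + 1) := by
      rw [pow_succ, div_pow, one_pow]; field_simp

lemma summable_Cp_term : Summable fun k => (-1 : ℝ) ^ k * (2 * s k + 1) / 4 ^ (k + 1) :=
  hasSum_three_quarters_mul_geometric.summable.of_norm_bounded (abs_Cp_term_le hs)

lemma abs_Cp_le_one : |Cp s| ≤ 1 :=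
  tsum_of_norm_bounded (f := fun k => (-1 : ℝ) ^ k * (2 * s k + 1) / 4 ^ (k + 1)) hasSum_three_quarters_mul_geometric (abs_Cp_term_le hs)

lemma Cp_eq_head_sub_Cp_tail : Cp s = (2 * s 0 + 1) / 4 - Cp (fun k => s (k + 1)) / 4 := by
  rw [Cp, (summable_Cp_term hs).tsum_eq_zero_add, Cp, ← tsum_div_const, sub_eq_add_neg, ← tsum_neg]
  congr 1
  · ring
  · congr 1; funext k; rw [pow_succ, pow_succ]; ring

lemma half_head_le_Cp : s 0 / 2 ≤ Cp s := by
  have htail := abs_le.mp (abs_Cp_le_one (s := fun k => s (k + 1)) fun k => hs (k + 1))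
  rw [Cp_eq_head_sub_Cp_tail hs]
  linarith [htail.2]

lemma Cp_nonneg : 0 ≤ Cp s :=
  (half_head_le_Cp hs).trans' (by linarith [(hs 0).1])

lemma Cp_le_head : Cp s ≤ (2 * s 0 + 1) / 4 := by
  have htail := Cp_nonneg (s := fun k => s (k + 1)) fun k => hs (k + 1)
  rw [Cp_eq_head_sub_Cp_tail hs]
  linarith

end UnitInterval

lemma IsBit.mem_Icc {x : ℝ} (hx : IsBit x) : x ∈ Set.Icc (0 : ℝ) 1 := by
  rcases hx with rfl | rfl <;> norm_num

theorem Cp_gap_and_threshold_general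
    (ρ : ℝ → ℝ)
    (hodd : ∀ x : ℝ, ρ (-x) = -ρ x)
    (hsat : ∀ x : ℝ, 1 ≤ x → ρ x = 1)
    (s : ℕ → ℝ) (hs : ∀ k, IsBit (s k)) :
    (s 0 = 1 → 1 ≤ 8 * Cp s - 3) ∧
    (s 0 = 0 → 8 * Cp s - 3 ≤ -1) ∧
    ρ (8 * Cp s - 3) = 2 * s 0 - 1 := by
  have hs' : ∀ k, s k ∈ Set.Icc (0 : ℝ) 1 := fun k => (hs k).mem_Icc
  have hone : s 0 = 1 → 1 ≤ 8 * Cp s - 3 := fun h0 => by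
    linarith [half_head_le_Cp hs']
  have hzero : s 0 = 0 → 8 * Cp s - 3 ≤ -1 := fun h0 => by
    linarith [Cp_le_head hs']
  refine ⟨hone, hzero, ?_⟩
  rcases hs 0 with h0 | h0
  · rw [← neg_neg (8 * Cp s - 3), hodd, hsat _ (by linarith [hzero h0]), h0]
    norm_num
  · rw [hsat _ (hone h0), h0]
    norm_num

theorem Cp_gap_and_threshold
    (ρ : ℝ → ℝ)
    (hodd : ∀ x : ℝ, ρ (-x) = -ρ x)
    (hsat : ∀ x : ℝ, 1 ≤ x → ρ x = 1)
    (hlin : ∀ x : ℝ, 0 ≤ x → x ≤ 3 / 4 → ρ x = x)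
    (s : ℕ → ℝ) (hs : ∀ k, IsBit (s k)) :
    (s 0 = 1 → 1 ≤ 8 * Cp s - 3) ∧
    (s 0 = 0 → 8 * Cp s - 3 ≤ -1) ∧
    ρ (8 * Cp s - 3) = 2 * s 0 - 1 :=
  Cp_gap_and_threshold_general ρ hodd hsat s hs
end

section
/- The symbol-reading step is exact: for any binary sequence s : ℕ → {0,1} with r = C⁺(s), the three-step iteration a ↦ ρ(a + 8r − 3), then a ↦ ρ(a), then a ↦ ρ(a) − a/2 + 1/2 starting from a = 0 terminates with a = s_0. -/
namespace Cp

variable {s : ℕ → ℝ}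

lemma norm_term_le (h0 : ∀ k, 0 ≤ s k) (h1 : ∀ k, s k ≤ 1) (k : ℕ) :
    ‖(-1 : ℝ) ^ k * (2 * s k + 1) / 4 ^ (k + 1)‖ ≤ 3 / 4 * (1 / 4) ^ k := by
  have h3 : |2 * s k + 1| ≤ 3 := abs_le.2 ⟨by linarith [h0 k], by linarith [h1 k]⟩
  rw [Real.norm_eq_abs, abs_div, abs_mul, abs_pow, abs_neg, abs_one, one_pow, one_mul,
    abs_of_pos (by positivity : (0 : ℝ) < 4 ^ (k + 1)), div_le_iff₀ (by positivity)]
  calc |2 * s k + 1| ≤ 3 := h3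
    _ = 3 / 4 * (1 / 4) ^ k * 4 ^ (k + 1) := by
      rw [pow_succ, div_pow, one_pow]; field_simp

lemma abs_le_one (h0 : ∀ k, 0 ≤ s k) (h1 : ∀ k, s k ≤ 1) : |Cp s| ≤ 1 := by
  have hg : HasSum (fun k : ℕ => 3 / 4 * (1 / 4 : ℝ) ^ k) 1 := by
    have := (hasSum_geometric_of_lt_one (r := (1 / 4 : ℝ)) (by norm_num) (by norm_num)).mul_left
      (3 / 4)
    rwa [show (3 / 4 : ℝ) * (1 - 1 / 4)⁻¹ = 1 by norm_num] at this
  exact tsum_of_norm_bounded hg (norm_term_le h0 h1)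

lemma eq_sub_shift (h0 : ∀ k, 0 ≤ s k) (h1 : ∀ k, s k ≤ 1) :
    Cp s = (2 * s 0 + 1) / 4 - Cp (fun k => s (k + 1)) / 4 := by
  have hsum : Summable fun k : ℕ => (-1 : ℝ) ^ k * (2 * s k + 1) / 4 ^ (k + 1) :=
    .of_norm_bounded ((summable_geometric_of_lt_one (by norm_num) (by norm_num)).mul_left _)
      (norm_term_le h0 h1)
  rw [Cp, hsum.tsum_eq_zero_add, Cp, ← tsum_div_const, sub_eq_add_neg, ← tsum_neg]
  congr 1
  · ring
  · congr 1; ext k; rw [pow_succ, pow_succ _ (k + 1)]; ring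

lemma nonneg (h0 : ∀ k, 0 ≤ s k) (h1 : ∀ k, s k ≤ 1) : 0 ≤ Cp s := by
  have h₁ := eq_sub_shift h0 h1
  have h₂ := eq_sub_shift (s := fun k => s (k + 1)) (fun k => h0 _) (fun k => h1 _)
  have h₃ := abs_le.1 (abs_le_one (s := fun k => s (k + 1 + 1)) (fun k => h0 _) (fun k => h1 _))
  linarith [h0 0, h1 1]

lemma mem_Icc (h0 : ∀ k, 0 ≤ s k) (h1 : ∀ k, s k ≤ 1) :
    Cp s ∈ Set.Icc (s 0 / 2) (s 0 / 2 + 1 / 4) := by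
  have h₁ := eq_sub_shift h0 h1
  have h₂ := nonneg (s := fun k => s (k + 1)) (fun k => h0 _) (fun k => h1 _)
  have h₃ := abs_le.1 (abs_le_one (s := fun k => s (k + 1)) (fun k => h0 _) (fun k => h1 _))
  constructor <;> linarith

end Cp

lemma IsBit.nonneg {x : ℝ} (hx : IsBit x) : 0 ≤ x := by rcases hx with rfl | rfl <;> norm_num

lemma IsBit.le_one {x : ℝ} (hx : IsBit x) : x ≤ 1 := by rcases hx with rfl | rfl <;> norm_num

lemma eq_neg_one_of_le_neg_one {ρ : ℝ → ℝ} (hodd : ∀ x, ρ (-x) = -ρ x)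
    (hsat : ∀ x, 1 ≤ x → ρ x = 1) (x : ℝ) (hx : x ≤ -1) : ρ x = -1 := by
  rw [← neg_neg x, hodd, hsat _ (by linarith)]

theorem symbol_reading_exact_general
    (ρ : ℝ → ℝ)
    (hodd : ∀ x : ℝ, ρ (-x) = -ρ x)
    (hsat : ∀ x : ℝ, 1 ≤ x → ρ x = 1)
    (s : ℕ → ℝ) (hs : ∀ k, IsBit (s k)) :
    let r := Cp s
    let a₁ := ρ (0 + 8 * r - 3)
    let a₂ := ρ a₁
    let a₃ := ρ a₂ - a₂ / 2 + 1 / 2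
    a₃ = s 0 := by
  intro r a₁ a₂ a₃
  obtain ⟨hr₀, hr₁⟩ := Cp.mem_Icc (fun k => (hs k).nonneg) (fun k => (hs k).le_one)
  have hsat_neg := eq_neg_one_of_le_neg_one hodd hsat
  rcases hs 0 with h | h
  · have ha₁ : a₁ = -1 := hsat_neg _ (by linarith)
    have ha₂ : a₂ = -1 := hsat_neg _ ha₁.le
    change ρ a₂ - a₂ / 2 + 1 / 2 = s 0
    rw [ha₂, hsat_neg _ le_rfl, h]; norm_num
  · have ha₁ : a₁ = 1 := hsat _ (by linarith)
    have ha₂ : a₂ = 1 := hsat _ ha₁.ge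
    change ρ a₂ - a₂ / 2 + 1 / 2 = s 0
    rw [ha₂, hsat _ le_rfl, h]; norm_num

theorem symbol_reading_exact
    (ρ : ℝ → ℝ)
    (hodd : ∀ x : ℝ, ρ (-x) = -ρ x)
    (hsat : ∀ x : ℝ, 1 ≤ x → ρ x = 1)
    (hlin : ∀ x : ℝ, 0 ≤ x → x ≤ 3 / 4 → ρ x = x)
    (s : ℕ → ℝ) (hs : ∀ k, IsBit (s k)) :
    let r := Cp s
    let a₁ := ρ (0 + 8 * r - 3)
    let a₂ := ρ a₁
    let a₃ := ρ a₂ - a₂ / 2 + 1 / 2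
    a₃ = s 0 :=
  symbol_reading_exact_general ρ hodd hsat s hs
end
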